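/- Let (X,l) and (Y,m) be A-monomial posets and let (f,λ), (f',λ') : (X,l) → (Y,m) be morphisms of A-monomial posets such that Σ(f,λ) − Σ(f',λ') (the images under Σ are contiguous morphisms of A-monomial simplicial complexes); in particular, for every x ∈ X, f(x) and f'(x) are comparable in Y. Define (f∪f')(x) = f'(x) and (λ∪λ')(x) = λ'(x) if f(x) ≤ f'(x), and (f∪f')(x) = f(x) and (λ∪λ')(x) = λ(x) if f'(x) < f(x). Then (f∪f', λ∪λ') is a morphism (X,l) → (Y,m) of A-monomial posets and (f,λ) ≤ (f∪f', λ∪λ') and (f',λ') ≤ (f∪f', λ∪λ'). -/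

import Mathlib

/-- An `A`-monomial structure on the poset `X`. -/
def IsMonomialPoset {A X : Type*} [Group A] [PartialOrder X] (l : X → X → A) : Prop :=
  (∀ x x' x'' : X, x ≤ x' → x' ≤ x'' → l x' x'' * l x x' = l x x'') ∧ ∀ x : X, l x x = 1

/-- `p = (f, λ)` is a morphism of `A`-monomial posets `(X,l) → (Y,m)`. -/
def IsPHom {A X Y : Type*} [Group A] [PartialOrder X] [PartialOrder Y]
    (l : X → X → A) (m : Y → Y → A) (p : (X → Y) × (X → A)) : Prop :=
  Monotone p.1 ∧ ∀ x x' : X, x ≤ x' → m (p.1 x) (p.1 x') * p.2 x = p.2 x' * l x x'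

/-- The relation `(f,λ) ≤ (f',λ')` on morphisms of `A`-monomial posets. -/
def PLe {A X Y : Type*} [Group A] [PartialOrder X] [PartialOrder Y]
    (m : Y → Y → A) (p q : (X → Y) × (X → A)) : Prop :=
  (∀ x, p.1 x ≤ q.1 x) ∧ ∀ x, m (p.1 x) (q.1 x) * p.2 x = q.2 x

/-- Two morphisms of `A`-monomial posets are comparable: `p ≤ q` or `q ≤ p`. -/
def PComparable {A X Y : Type*} [Group A] [PartialOrder X] [PartialOrder Y]
    (l : X → X → A) (m : Y → Y → A) (p q : (X → Y) × (X → A)) : Prop :=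
  IsPHom l m p ∧ IsPHom l m q ∧ (PLe m p q ∨ PLe m q p)

/-- Homotopy of morphisms of `A`-monomial posets. -/
def PHomotopic {A X Y : Type*} [Group A] [PartialOrder X] [PartialOrder Y]
    (l : X → X → A) (m : Y → Y → A) :
    ((X → Y) × (X → A)) → ((X → Y) × (X → A)) → Prop :=
  Relation.ReflTransGen (PComparable l m)

/-- `𝒮` is (the set of simplices of) a simplicial complex on the vertex set `S`. -/
def IsSComplex {S : Type*} (𝒮 : Set (Finset S)) : Prop :=
  (∀ σ ∈ 𝒮, σ.Nonempty) ∧ (∀ s : S, ({s} : Finset S) ∈ 𝒮) ∧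
    ∀ σ ∈ 𝒮, ∀ τ : Finset S, τ ⊆ σ → τ.Nonempty → τ ∈ 𝒮

/-- `(S,𝒮,l)` is an `A`-monomial simplicial complex. -/
def IsMonomialSC {A S : Type*} [Group A]
    (𝒮 : Set (Finset S)) (l : Finset S → Finset S → A) : Prop :=
  IsSComplex 𝒮 ∧
    (∀ σ τ υ : Finset S, σ ∈ 𝒮 → τ ∈ 𝒮 → υ ∈ 𝒮 → σ ⊆ τ → τ ⊆ υ →
      l τ υ * l σ τ = l σ υ) ∧
    ∀ σ ∈ 𝒮, l σ σ = 1

/-- `p = (f,λ)` is a morphism of `A`-monomial simplicial complexes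
`(S,𝒮,l) → (T,𝒯,m)`. -/
def IsSHom {A S T : Type*} [Group A] [DecidableEq T]
    (𝒮 : Set (Finset S)) (𝒯 : Set (Finset T))
    (l : Finset S → Finset S → A) (m : Finset T → Finset T → A)
    (p : (S → T) × (Finset S → A)) : Prop :=
  (∀ σ ∈ 𝒮, σ.image p.1 ∈ 𝒯) ∧
    ∀ σ τ : Finset S, σ ∈ 𝒮 → τ ∈ 𝒮 → σ ⊆ τ →
      m (σ.image p.1) (τ.image p.1) * p.2 σ = p.2 τ * l σ τ

/-- Contiguity `(f,λ) − (f',λ')` of morphisms of `A`-monomial simplicial complexes. -/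
def SContig {A S T : Type*} [Group A] [DecidableEq T]
    (𝒮 : Set (Finset S)) (𝒯 : Set (Finset T)) (m : Finset T → Finset T → A)
    (p q : (S → T) × (Finset S → A)) : Prop :=
  (∀ σ ∈ 𝒮, σ.image p.1 ∪ σ.image q.1 ∈ 𝒯) ∧
    ∀ σ ∈ 𝒮, m (σ.image p.1) (σ.image p.1 ∪ σ.image q.1) * p.2 σ
      = m (σ.image q.1) (σ.image p.1 ∪ σ.image q.1) * q.2 σ

/-- `Σ(X)`: the set of nonempty finite totally ordered subsets (chains) of the poset `X`. -/
def SigmaSet (X : Type*) [PartialOrder X] : Set (Finset X) :=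
  {σ | σ.Nonempty ∧ ∀ x ∈ σ, ∀ y ∈ σ, x ≤ y ∨ y ≤ x}

/-!
Contiguity, evaluated on the singleton chain `{x}`, says that `f x` and `f' x` are comparable and
that `λ x` and `λ' x` agree once transported along `m` to the larger of the two. Hence `(F, L)`
dominates both `(f, λ)` and `(f', λ')` at every point while agreeing with one of them there; such
a pointwise maximum of two morphisms is again a morphism, by the cocycle identity of `m`.
-/

section MonomialPoset

variable {A X Y : Type*} [Group A] [PartialOrder Y] {m : Y → Y → A} {p q r : (X → Y) × (X → A)}

def PLeAt (m : Y → Y → A) (p q : (X → Y) × (X → A)) (x : X) : Prop :=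
  p.1 x ≤ q.1 x ∧ m (p.1 x) (q.1 x) * p.2 x = q.2 x

theorem pLeAt_refl (hm : IsMonomialPoset m) (p : (X → Y) × (X → A)) (x : X) :
    PLeAt m p p x :=
  ⟨le_rfl, by rw [hm.2, one_mul]⟩

theorem PLeAt.of_eq_right {x : X} (h : PLeAt m p q x) (hF : r.1 x = q.1 x)
    (hL : r.2 x = q.2 x) : PLeAt m p r x := by
  rw [PLeAt, hF, hL]
  exact h

variable [PartialOrder X] {l : X → X → A}

theorem pLe_iff_forall_pLeAt : PLe m p q ↔ ∀ x, PLeAt m p q x :=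
  forall_and.symm

theorem IsPHom.le_of_pLe (hp : IsPHom l m p) (hpr : PLe m p r) {x x' : X} (hxx' : x ≤ x')
    (hx : r.1 x = p.1 x) : r.1 x ≤ r.1 x' :=
  hx ▸ (hp.1 hxx').trans (hpr.1 x')

theorem IsPHom.mul_eq_of_pLe (hm : IsMonomialPoset m) (hp : IsPHom l m p) (hpr : PLe m p r)
    (hr : Monotone r.1) {x x' : X} (hxx' : x ≤ x') (hF : r.1 x' = p.1 x')
    (hL : r.2 x' = p.2 x') : m (r.1 x) (r.1 x') * r.2 x = r.2 x' * l x x' :=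
  calc m (r.1 x) (r.1 x') * r.2 x
      = m (r.1 x) (r.1 x') * m (p.1 x) (r.1 x) * p.2 x := by rw [mul_assoc, hpr.2 x]
    _ = m (p.1 x) (p.1 x') * p.2 x := by rw [hm.1 _ _ _ (hpr.1 x) (hr hxx'), hF]
    _ = r.2 x' * l x x' := by rw [hp.2 x x' hxx', hL]

theorem isPHom_of_pLe_of_forall_eq_or_eq (hm : IsMonomialPoset m) (hp : IsPHom l m p)
    (hq : IsPHom l m q) (hpr : PLe m p r) (hqr : PLe m q r)
    (hr : ∀ x, (r.1 x = p.1 x ∧ r.2 x = p.2 x) ∨ (r.1 x = q.1 x ∧ r.2 x = q.2 x)) :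
    IsPHom l m r := by
  have hmono : Monotone r.1 := fun x x' hxx' => by
    rcases hr x with ⟨hF, -⟩ | ⟨hF, -⟩
    · exact hp.le_of_pLe hpr hxx' hF
    · exact hq.le_of_pLe hqr hxx' hF
  refine ⟨hmono, fun x x' hxx' => ?_⟩
  rcases hr x' with ⟨hF, hL⟩ | ⟨hF, hL⟩
  · exact hp.mul_eq_of_pLe hm hpr hmono hxx' hF hL
  · exact hq.mul_eq_of_pLe hm hqr hmono hxx' hF hL

theorem isPHom_pLe_pLe_of_pointwise_max (hm : IsMonomialPoset m) (hp : IsPHom l m p)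
    (hq : IsPHom l m q)
    (hr : ∀ x, (PLeAt m p q x ∧ r.1 x = q.1 x ∧ r.2 x = q.2 x) ∨
      (PLeAt m q p x ∧ r.1 x = p.1 x ∧ r.2 x = p.2 x)) :
    IsPHom l m r ∧ PLe m p r ∧ PLe m q r := by
  have hpr : PLe m p r := pLe_iff_forall_pLeAt.2 fun x => by
    rcases hr x with ⟨hpq, hF, hL⟩ | ⟨-, hF, hL⟩
    · exact hpq.of_eq_right hF hL
    · exact (pLeAt_refl hm p x).of_eq_right hF hL
  have hqr : PLe m q r := pLe_iff_forall_pLeAt.2 fun x => by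
    rcases hr x with ⟨-, hF, hL⟩ | ⟨hqp, hF, hL⟩
    · exact (pLeAt_refl hm q x).of_eq_right hF hL
    · exact hqp.of_eq_right hF hL
  refine ⟨isPHom_of_pLe_of_forall_eq_or_eq hm hp hq hpr hqr fun x => ?_, hpr, hqr⟩
  rcases hr x with ⟨-, h⟩ | ⟨-, h⟩
  exacts [Or.inr h, Or.inl h]

end MonomialPoset

section Contiguity

variable {A S T : Type*} [Group A] [DecidableEq T]

theorem SContig.symm {𝒮 : Set (Finset S)} {𝒯 : Set (Finset T)} {m : Finset T → Finset T → A}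
    {p q : (S → T) × (Finset S → A)} (hc : SContig 𝒮 𝒯 m p q) : SContig 𝒮 𝒯 m q p :=
  ⟨fun σ hσ => Finset.union_comm (σ.image p.1) _ ▸ hc.1 σ hσ,
    fun σ hσ => by rw [Finset.union_comm]; exact (hc.2 σ hσ).symm⟩

end Contiguity

section Chains

variable {X : Type*} [PartialOrder X] {g : Finset X → X}

theorem singleton_mem_sigmaSet (x : X) : ({x} : Finset X) ∈ SigmaSet X :=
  ⟨Finset.singleton_nonempty x, by simp⟩

theorem pair_mem_sigmaSet [DecidableEq X] {x y : X} (h : x ≤ y ∨ y ≤ x) :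
    ({x} ∪ {y} : Finset X) ∈ SigmaSet X :=
  ⟨by simp, by aesop⟩

variable (hg : ∀ σ ∈ SigmaSet X, g σ ∈ σ ∧ ∀ x ∈ σ, x ≤ g σ)
include hg

theorem greatest_singleton (x : X) : g {x} = x :=
  Finset.mem_singleton.mp (hg _ (singleton_mem_sigmaSet x)).1

theorem greatest_pair_of_le [DecidableEq X] {x y : X} (h : x ≤ y) : g ({x} ∪ {y}) = y := by
  obtain ⟨hmem, hle⟩ := hg _ (pair_mem_sigmaSet (Or.inl h))
  refine le_antisymm ?_ (hle y (by simp))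
  rcases Finset.mem_union.mp hmem with h' | h' <;> rw [Finset.mem_singleton.mp h']
  exact h

end Chains

section SigmaContiguity

variable {A X Y : Type*} [Group A] [PartialOrder X] [PartialOrder Y] [DecidableEq Y]
  {m : Y → Y → A} {gX : Finset X → X} {gY : Finset Y → Y} {f f' : X → Y} {lam lam' : X → A}

theorem SContig.le_or_le_of_sigmaSet
    (hc : SContig (SigmaSet X) (SigmaSet Y) (fun τ τ' => m (gY τ) (gY τ'))
      (f, fun σ => lam (gX σ)) (f', fun σ => lam' (gX σ))) (x : X) :
    f x ≤ f' x ∨ f' x ≤ f x := by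
  have hchain := hc.1 _ (singleton_mem_sigmaSet x)
  simp only [Finset.image_singleton] at hchain
  exact hchain.2 _ (by simp) _ (by simp)

theorem SContig.pLeAt_of_le (hm : IsMonomialPoset m)
    (hgX : ∀ σ ∈ SigmaSet X, gX σ ∈ σ ∧ ∀ x ∈ σ, x ≤ gX σ)
    (hgY : ∀ τ ∈ SigmaSet Y, gY τ ∈ τ ∧ ∀ y ∈ τ, y ≤ gY τ)
    (hc : SContig (SigmaSet X) (SigmaSet Y) (fun τ τ' => m (gY τ) (gY τ'))
      (f, fun σ => lam (gX σ)) (f', fun σ => lam' (gX σ))) {x : X} (h : f x ≤ f' x) :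
    PLeAt m (f, lam) (f', lam') x := by
  have heq := hc.2 _ (singleton_mem_sigmaSet x)
  simp only [Finset.image_singleton] at heq
  rw [greatest_singleton hgX, greatest_singleton hgY, greatest_singleton hgY,
    greatest_pair_of_le hgY h, hm.2, one_mul] at heq
  exact ⟨h, heq⟩

end SigmaContiguity

theorem stmt15_general {A X Y : Type*} [Group A] [PartialOrder X] [PartialOrder Y] [DecidableEq Y]
    (l : X → X → A) (m : Y → Y → A)
    (hm : IsMonomialPoset m)
    (gX : Finset X → X) (hgX : ∀ σ ∈ SigmaSet X, gX σ ∈ σ ∧ ∀ x ∈ σ, x ≤ gX σ)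
    (gY : Finset Y → Y) (hgY : ∀ τ ∈ SigmaSet Y, gY τ ∈ τ ∧ ∀ y ∈ τ, y ≤ gY τ)
    (f f' : X → Y) (lam lam' : X → A)
    (hp : IsPHom l m (f, lam)) (hp' : IsPHom l m (f', lam'))
    (hc : SContig (SigmaSet X) (SigmaSet Y) (fun τ τ' => m (gY τ) (gY τ'))
      (f, fun σ => lam (gX σ)) (f', fun σ => lam' (gX σ)))
    (F : X → Y) (L : X → A)
    (hFL : ∀ x : X, (f x ≤ f' x → F x = f' x ∧ L x = lam' x) ∧
      (f' x < f x → F x = f x ∧ L x = lam x)) :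
    IsPHom l m (F, L) ∧ PLe m (f, lam) (F, L) ∧ PLe m (f', lam') (F, L) := by
  refine isPHom_pLe_pLe_of_pointwise_max hm hp hp' fun x => ?_
  rcases hc.le_or_le_of_sigmaSet x with h | h
  · exact Or.inl ⟨hc.pLeAt_of_le hm hgX hgY h, (hFL x).1 h⟩
  · rcases h.lt_or_eq with h | h
    · exact Or.inr ⟨hc.symm.pLeAt_of_le hm hgX hgY h.le, (hFL x).2 h⟩
    · exact Or.inl ⟨hc.pLeAt_of_le hm hgX hgY h.ge, (hFL x).1 h.ge⟩

/-- if `Σ(f,λ) − Σ(f',λ')` (the images under `Σ` are contiguous morphisms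
`Σ(X,l) → Σ(Y,m)` of `A`-monomial simplicial complexes), then the pair `(f∪f', λ∪λ')`,
given by `(f∪f')(x) = f'(x)`, `(λ∪λ')(x) = λ'(x)` if `f(x) ≤ f'(x)` and
`(f∪f')(x) = f(x)`, `(λ∪λ')(x) = λ(x)` if `f'(x) < f(x)`, is a morphism
`(X,l) → (Y,m)` of `A`-monomial posets with `(f,λ) ≤ (f∪f',λ∪λ')` and
`(f',λ') ≤ (f∪f',λ∪λ')`.  Here `gX`/`gY` pick the greatest element of a chain. -/
theorem stmt15 {A X Y : Type*} [Group A] [PartialOrder X] [PartialOrder Y] [DecidableEq Y]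
    (l : X → X → A) (m : Y → Y → A)
    (hl : IsMonomialPoset l) (hm : IsMonomialPoset m)
    (gX : Finset X → X) (hgX : ∀ σ ∈ SigmaSet X, gX σ ∈ σ ∧ ∀ x ∈ σ, x ≤ gX σ)
    (gY : Finset Y → Y) (hgY : ∀ τ ∈ SigmaSet Y, gY τ ∈ τ ∧ ∀ y ∈ τ, y ≤ gY τ)
    (f f' : X → Y) (lam lam' : X → A)
    (hp : IsPHom l m (f, lam)) (hp' : IsPHom l m (f', lam'))
    (hc : SContig (SigmaSet X) (SigmaSet Y) (fun τ τ' => m (gY τ) (gY τ'))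
      (f, fun σ => lam (gX σ)) (f', fun σ => lam' (gX σ)))
    (F : X → Y) (L : X → A)
    (hFL : ∀ x : X, (f x ≤ f' x → F x = f' x ∧ L x = lam' x) ∧
      (f' x < f x → F x = f x ∧ L x = lam x)) :
    IsPHom l m (F, L) ∧ PLe m (f, lam) (F, L) ∧ PLe m (f', lam') (F, L) :=
  stmt15_general l m hm gX hgX gY hgY f f' lam lam' hp hp' hc F L hFL
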